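/- In the canonical model of MPT, the relation →□ is antisymmetric: if s →□ t and t →□ s, then s = t. -/

import Mathlib

inductive Fml : Type
  | atom : ℕ → Fml
  | neg : Fml → Fml
  | and : Fml → Fml → Fml
  | K : Fml → Fml
  | box : Fml → Fml

def Fml.imp (φ ψ : Fml) : Fml := (φ.and ψ.neg).neg
def Fml.or (φ ψ : Fml) : Fml := (φ.neg.and ψ.neg).neg

/-- Boolean evaluation treating atoms, `K`-formulae and `□`-formulae as opaque;
used to express "all propositional tautologies". -/
def evalB (v : Fml → Bool) : Fml → Bool
  | .neg φ => !(evalB v φ)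
  | .and φ ψ => evalB v φ && evalB v ψ
  | φ => v φ

/-- Provability in the bimodal system MPT. -/
inductive Prf : Fml → Prop
  | taut (φ : Fml) : (∀ v : Fml → Bool, evalB v φ = true) → Prf φ
  | mp {φ ψ : Fml} : Prf (φ.imp ψ) → Prf φ → Prf ψ
  | atomPerm (n : ℕ) : Prf ((((Fml.atom n).imp (Fml.atom n).box)).and
      (((Fml.atom n).neg).imp ((Fml.atom n).neg).box))
  | normBox (φ ψ : Fml) : Prf ((φ.imp ψ).box.imp (φ.box.imp ψ.box))
  | boxT (φ : Fml) : Prf (φ.box.imp φ)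
  | box4 (φ : Fml) : Prf (φ.box.imp φ.box.box)
  | normK (φ ψ : Fml) : Prf ((φ.imp ψ).K.imp (φ.K.imp ψ.K))
  | kT (φ : Fml) : Prf (φ.K.imp φ)
  | k4 (φ : Fml) : Prf (φ.K.imp φ.K.K)
  | k5 (φ : Fml) : Prf (φ.imp φ.neg.K.neg.K)
  | cross (φ : Fml) : Prf (φ.box.K.imp φ.K.box)
  | conn (φ ψ : Fml) : Prf (((φ.box.imp ψ).box).or ((ψ.box.imp φ).box))
  | ntree (φ ψ : Fml) : Prf (((φ.K.box).and ((φ.box.imp ψ.box).K)).imp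
      ((φ.box.imp ψ.box).K.box))
  | necK {φ : Fml} : Prf φ → Prf φ.K
  | necBox {φ : Fml} : Prf φ → Prf φ.box

/-- Conjunction of a finite list of formulae (empty list ↦ a tautology). -/
def conj : List Fml → Fml
  | [] => ((Fml.atom 0).and (Fml.atom 0).neg).neg
  | φ :: l => φ.and (conj l)

/-- A set of formulae is consistent if no finite conjunction from it is refutable. -/
def Consistent (s : Set Fml) : Prop :=
  ∀ l : List Fml, (∀ φ ∈ l, φ ∈ s) → ¬ Prf (conj l).neg

/-- Maximal consistent sets: the points of the canonical model. -/
def MCS (s : Set Fml) : Prop :=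
  Consistent s ∧ ∀ t : Set Fml, Consistent t → s ⊆ t → s = t

/-- Canonical `□`-accessibility: `s →□ t` iff `{φ : □φ ∈ s} ⊆ t`. -/
def RB (s t : Set Fml) : Prop := ∀ φ : Fml, φ.box ∈ s → φ ∈ t

/-- Canonical `K`-accessibility: `s →K t` iff `{φ : Kφ ∈ s} ⊆ t`. -/
def RK (s t : Set Fml) : Prop := ∀ φ : Fml, φ.K ∈ s → φ ∈ t

/-!
Antisymmetry of `→□` is the case `y = v` of a stronger agreement property: if `u →□ v` and
`v →K y →□ u` for some `y`, then `u` and `v` contain the same formulae. This is proved by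
induction on the formula. Atoms are `□`-persistent in both polarities. For `□φ`, a
`□`-successor `z` of `u` missing `φ` is compared with `v` by connectedness of `→□`; if `z →□ v`,
then the triple `(z, v, y)` again satisfies the hypothesis. For `Kφ`, a `K`-witness `w` missing
`φ` is pulled back by the cross property to some `m` with `m →□ w`, and a second application of
the cross property supplies the `y` that makes the induction hypothesis applicable to `(m, w)`.
-/

variable {v : Fml → Bool} {φ ψ χ : Fml} {l : List Fml} {s t u : Set Fml}

@[grind =] theorem evalB_neg : evalB v φ.neg = true ↔ ¬ evalB v φ = true := by
  simp [evalB]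

@[grind =] theorem evalB_and :
    evalB v (φ.and ψ) = true ↔ evalB v φ = true ∧ evalB v ψ = true := by
  simp [evalB]

@[grind =] theorem evalB_imp :
    evalB v (φ.imp ψ) = true ↔ (evalB v φ = true → evalB v ψ = true) := by
  simp only [Fml.imp, evalB_neg, evalB_and]
  tauto

@[grind =] theorem evalB_conj : evalB v (conj l) = true ↔ ∀ φ ∈ l, evalB v φ = true := by
  induction l <;> simp [conj, evalB, *]

theorem Prf.imp_trans (h₁ : Prf (φ.imp ψ)) (h₂ : Prf (ψ.imp χ)) : Prf (φ.imp χ) :=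
  .mp (.mp (.taut _ fun _ => by grind) h₁) h₂

def Derives (s : Set Fml) (φ : Fml) : Prop :=
  ∃ l : List Fml, (∀ ψ ∈ l, ψ ∈ s) ∧ Prf ((conj l).imp φ)

namespace Derives

theorem of_mem (h : φ ∈ s) : Derives s φ :=
  ⟨[φ], by simpa using h, .taut _ fun _ => by grind⟩

theorem of_prf (h : Prf φ) : Derives s φ :=
  ⟨[], by simp, .mp (.taut _ fun _ => by grind) h⟩

theorem mp (h₁ : Derives s (φ.imp ψ)) (h₂ : Derives s φ) : Derives s ψ := by
  obtain ⟨l₁, hl₁, hp₁⟩ := h₁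
  obtain ⟨l₂, hl₂, hp₂⟩ := h₂
  refine ⟨l₁ ++ l₂, fun χ hχ => (List.mem_append.1 hχ).elim (hl₁ χ) (hl₂ χ), ?_⟩
  exact .mp (.mp (.taut _ fun _ => by grind) hp₁) hp₂

theorem of_prf_imp (h : Prf (φ.imp ψ)) (hφ : Derives s φ) : Derives s ψ :=
  (of_prf h).mp hφ

end Derives

theorem Consistent.not_derives_and_neg (hs : Consistent s) (h₁ : Derives s φ)
    (h₂ : Derives s φ.neg) : False := by
  obtain ⟨l, hl, hp⟩ :=
    (Derives.of_prf_imp (.taut (φ.imp (φ.neg.imp (conj []).neg)) fun _ => by grind) h₁).mp h₂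
  exact hs l hl (.mp (.taut _ fun _ => by grind) hp)

theorem exists_derives_neg_conj_of_not_consistent_union {X Y : Set Fml}
    (h : ¬ Consistent (X ∪ Y)) : ∃ l : List Fml, (∀ ψ ∈ l, ψ ∈ Y) ∧ Derives X (conj l).neg := by
  classical
  simp only [Consistent, not_forall, not_not] at h
  obtain ⟨l, hl, hp⟩ := h
  have hsplit : ∀ ψ ∈ l, ψ ∈ l.filter (· ∉ Y) ∨ ψ ∈ l.filter (· ∈ Y) := by
    intro ψ hψ
    by_cases hψY : ψ ∈ Y <;> simp [hψ, hψY]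
  refine ⟨l.filter (· ∈ Y), fun ψ hψ => by simpa using (List.mem_filter.1 hψ).2,
    l.filter (· ∉ Y), fun ψ hψ => ?_, .mp (.taut _ fun _ => by grind) hp⟩
  simp only [List.mem_filter, decide_eq_true_eq] at hψ
  exact (hl ψ hψ.1).resolve_right hψ.2

theorem derives_neg_of_not_consistent_insert (h : ¬ Consistent (insert φ s)) :
    Derives s φ.neg := by
  rw [Set.insert_eq, Set.union_comm] at h
  obtain ⟨l, hl, hd⟩ := exists_derives_neg_conj_of_not_consistent_union h
  have hl' : ∀ ψ ∈ l, ψ = φ := hl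
  exact hd.of_prf_imp (.taut _ fun _ => by grind)

theorem isOfFiniteCharacter_consistent :
    Order.IsOfFiniteCharacter {s : Set Fml | Consistent s} := by
  refine fun s => ⟨fun hs t hts _ l hl => hs l fun ψ hψ => hts (hl ψ hψ), fun h l hl => ?_⟩
  exact h {ψ | ψ ∈ l} (fun ψ hψ => hl ψ hψ) l.finite_toSet l fun _ => id

theorem Consistent.exists_superset_mcs (h : Consistent s) : ∃ t, s ⊆ t ∧ MCS t := by
  obtain ⟨m, hsm, hm⟩ := isOfFiniteCharacter_consistent.exists_maximal h
  exact ⟨m, hsm, hm.1, fun t ht hmt => hmt.antisymm (hm.2 ht hmt)⟩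

namespace MCS

theorem mem_of_consistent_insert (hs : MCS s) (h : Consistent (insert φ s)) : φ ∈ s := by
  rw [hs.2 _ h (Set.subset_insert _ _)]
  exact Set.mem_insert _ _

theorem mem_of_derives (hs : MCS s) (h : Derives s φ) : φ ∈ s := by
  by_contra hφ
  exact hs.1.not_derives_and_neg h
    (derives_neg_of_not_consistent_insert (mt hs.mem_of_consistent_insert hφ))

theorem neg_mem_iff (hs : MCS s) : φ.neg ∈ s ↔ φ ∉ s := by
  refine ⟨fun h hφ => hs.1.not_derives_and_neg (.of_mem hφ) (.of_mem h), fun hφ => ?_⟩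
  refine hs.mem_of_consistent_insert (by_contra fun hc => hφ (hs.mem_of_derives ?_))
  exact (derives_neg_of_not_consistent_insert hc).of_prf_imp (.taut _ fun _ => by grind)

theorem mem_of_prf (hs : MCS s) (h : Prf φ) : φ ∈ s :=
  hs.mem_of_derives (.of_prf h)

theorem mem_of_prf_imp (hs : MCS s) (h : Prf (φ.imp ψ)) (hφ : φ ∈ s) : ψ ∈ s :=
  hs.mem_of_derives ((Derives.of_mem hφ).of_prf_imp h)

theorem mp_mem (hs : MCS s) (h : φ.imp ψ ∈ s) (hφ : φ ∈ s) : ψ ∈ s :=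
  hs.mem_of_derives ((Derives.of_mem h).mp (.of_mem hφ))

theorem and_mem_iff (hs : MCS s) : φ.and ψ ∈ s ↔ φ ∈ s ∧ ψ ∈ s :=
  ⟨fun h => ⟨hs.mem_of_prf_imp (.taut _ fun _ => by grind) h,
      hs.mem_of_prf_imp (.taut _ fun _ => by grind) h⟩,
    fun ⟨hφ, hψ⟩ => hs.mem_of_derives
      (((Derives.of_mem hφ).of_prf_imp (.taut _ fun _ => by grind)).mp (.of_mem hψ))⟩

theorem mem_or_mem (hs : MCS s) (h : φ.or ψ ∈ s) : φ ∈ s ∨ ψ ∈ s := by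
  by_contra! hn
  exact hs.neg_mem_iff.1 h (hs.and_mem_iff.2 ⟨hs.neg_mem_iff.2 hn.1, hs.neg_mem_iff.2 hn.2⟩)

theorem conj_mem (hs : MCS s) (h : ∀ ψ ∈ l, ψ ∈ s) : conj l ∈ s :=
  hs.mem_of_derives ⟨l, h, .taut _ fun _ => by grind⟩

end MCS

structure NormalModality (M : Fml → Fml) : Prop where
  distrib (φ ψ : Fml) : Prf ((M (φ.imp ψ)).imp ((M φ).imp (M ψ)))
  nec {φ : Fml} : Prf φ → Prf (M φ)

theorem normalModality_box : NormalModality Fml.box := ⟨Prf.normBox, Prf.necBox⟩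

theorem normalModality_K : NormalModality Fml.K := ⟨Prf.normK, Prf.necK⟩

namespace NormalModality

variable {M : Fml → Fml}

theorem mono (hM : NormalModality M) (h : Prf (φ.imp ψ)) : Prf ((M φ).imp (M ψ)) :=
  .mp (hM.distrib φ ψ) (hM.nec h)

theorem conj_map_imp (hM : NormalModality M) (l : List Fml) :
    Prf ((conj (l.map M)).imp (M (conj l))) := by
  induction l with
  | nil => exact .mp (.taut _ fun _ => by grind) (hM.nec (.taut (conj []) fun _ => by grind))
  | cons φ l ih =>
    have hpair := hM.mono (.taut (φ.imp ((conj l).imp (φ.and (conj l)))) fun _ => by grind)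
    have hdistrib := hM.distrib (conj l) (φ.and (conj l))
    rw [List.map_cons, conj, conj]
    exact .mp (.mp (.mp (.taut _ fun _ => by grind) hpair) hdistrib) ih

theorem mem_of_derives (hM : NormalModality M) (hs : MCS s) (h : Derives {ψ | M ψ ∈ s} φ) :
    M φ ∈ s := by
  obtain ⟨l, hl, hp⟩ := h
  exact hs.mem_of_prf_imp ((hM.conj_map_imp l).imp_trans (hM.mono hp))
    (hs.conj_mem (by simpa using hl))

theorem exists_mcs_not_mem (hM : NormalModality M) (hs : MCS s) (h : M φ ∉ s) :
    ∃ t, MCS t ∧ (∀ ψ, M ψ ∈ s → ψ ∈ t) ∧ φ ∉ t := by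
  have hcons : Consistent (insert φ.neg {ψ | M ψ ∈ s}) := by
    by_contra hc
    exact h (hM.mem_of_derives hs
      ((derives_neg_of_not_consistent_insert hc).of_prf_imp (.taut _ fun _ => by grind)))
  obtain ⟨t, hsub, ht⟩ := hcons.exists_superset_mcs
  exact ⟨t, ht, fun ψ hψ => hsub (Set.mem_insert_of_mem _ hψ),
    ht.neg_mem_iff.1 (hsub (Set.mem_insert _ _))⟩

end NormalModality

theorem rk_refl (hs : MCS s) : RK s s :=
  fun φ => hs.mem_of_prf_imp (Prf.kT φ)

theorem rk_trans (hs : MCS s) (hst : RK s t) (htu : RK t u) : RK s u :=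
  fun φ hφ => htu φ (hst _ (hs.mem_of_prf_imp (Prf.k4 φ) hφ))

theorem rk_symm (hs : MCS s) (ht : MCS t) (hst : RK s t) : RK t s := by
  intro φ hφ
  by_contra hφs
  have hneg : φ.neg.neg.K.neg ∈ t :=
    hst _ (hs.mem_of_prf_imp (Prf.k5 φ.neg) (hs.neg_mem_iff.2 hφs))
  exact ht.neg_mem_iff.1 hneg
    (ht.mem_of_prf_imp (normalModality_K.mono (.taut _ fun _ => by grind)) hφ)

theorem rb_trans (hs : MCS s) (hst : RB s t) (htu : RB t u) : RB s u :=
  fun φ hφ => htu φ (hst _ (hs.mem_of_prf_imp (Prf.box4 φ) hφ))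

theorem rb_or_rb_of_rb_of_rb (hs : MCS s) (ht : MCS t) (hu : MCS u) (hst : RB s t)
    (hsu : RB s u) : RB t u ∨ RB u t := by
  by_contra! h
  simp only [RB, not_forall, exists_prop] at h
  obtain ⟨⟨φ, hφt, hφu⟩, ⟨ψ, hψu, hψt⟩⟩ := h
  rcases hs.mem_or_mem (hs.mem_of_prf (Prf.conn φ ψ)) with h | h
  · exact hψt (ht.mp_mem (hst _ h) hφt)
  · exact hφu (hu.mp_mem (hsu _ h) hψu)

theorem prf_neg_conj_imp_box (l : List Fml) (hl : ∀ ψ ∈ l, ∃ δ : Fml, ψ = δ.box.neg) :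
    Prf ((conj l).neg.imp (conj l).neg.box) := by
  induction l with
  | nil => exact .taut _ fun _ => by grind
  | cons ψ l ih =>
    obtain ⟨δ, rfl⟩ := hl ψ List.mem_cons_self
    replace ih := ih fun ψ hψ => hl ψ (List.mem_cons_of_mem _ hψ)
    clear hl
    rw [conj]
    generalize conj l = C at ih ⊢
    have hδ : Prf (δ.box.imp (δ.box.neg.and C).neg.box) :=
      (Prf.box4 δ).imp_trans (normalModality_box.mono (.taut _ fun _ => by grind))
    have hC : Prf (C.neg.imp (δ.box.neg.and C).neg.box) :=
      ih.imp_trans (normalModality_box.mono (.taut _ fun _ => by grind))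
    refine .mp (.mp (.taut _ fun _ => ?_) hδ) hC
    simp only [evalB_imp, evalB_neg, evalB_and]
    tauto

theorem exists_rk_rb_of_rb_rk (hs : MCS s) (hu : MCS u) (hst : RB s t) (htu : RK t u) :
    ∃ w, MCS w ∧ RK s w ∧ RB w u := by
  have hcons : Consistent ({χ | χ.K ∈ s} ∪ {ψ | ∃ δ : Fml, ψ = δ.box.neg ∧ δ.box ∉ u}) := by
    by_contra hc
    obtain ⟨l, hl, hd⟩ := exists_derives_neg_conj_of_not_consistent_union hc
    have hpers := prf_neg_conj_imp_box l fun ψ hψ => (hl ψ hψ).imp fun _ => And.left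
    have hKbox : (conj l).neg.box.K ∈ s :=
      normalModality_K.mem_of_derives hs (hd.of_prf_imp hpers)
    have hneg : (conj l).neg ∈ u := htu _ (hst _ (hs.mem_of_prf_imp (Prf.cross _) hKbox))
    refine hu.neg_mem_iff.1 hneg (hu.conj_mem fun ψ hψ => ?_)
    obtain ⟨δ, rfl, hδ⟩ := hl ψ hψ
    exact hu.neg_mem_iff.2 hδ
  obtain ⟨w, hsub, hw⟩ := hcons.exists_superset_mcs
  refine ⟨w, hw, fun χ hχ => hsub (Or.inl hχ), fun δ hδ => hu.mem_of_prf_imp (Prf.boxT δ) ?_⟩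
  by_contra hδu
  exact hw.neg_mem_iff.1 (hsub (Or.inr ⟨δ, rfl, hδu⟩)) hδ

def Agrees (φ : Fml) : Prop :=
  ∀ ⦃u v y : Set Fml⦄, MCS u → MCS v → MCS y → RB u v → RK v y → RB y u → (φ ∈ u ↔ φ ∈ v)

theorem agrees_atom (n : ℕ) : Agrees (.atom n) := by
  intro u v y hu hv _ huv _ _
  have hperm := Prf.atomPerm n
  refine ⟨fun h => huv _ (hu.mem_of_prf_imp (.mp (.taut _ fun _ => by grind) hperm) h),
    fun h => by_contra fun hn => hv.neg_mem_iff.1 (huv _ ?_) h⟩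
  exact hu.mem_of_prf_imp (.mp (.taut _ fun _ => by grind) hperm) (hu.neg_mem_iff.2 hn)

theorem Agrees.neg (h : Agrees φ) : Agrees φ.neg := fun _ _ _ hu hv hy huv hvy hyu => by
  rw [hu.neg_mem_iff, hv.neg_mem_iff, h hu hv hy huv hvy hyu]

theorem Agrees.and (hφ : Agrees φ) (hψ : Agrees ψ) : Agrees (φ.and ψ) :=
  fun _ _ _ hu hv hy huv hvy hyu => by
    rw [hu.and_mem_iff, hv.and_mem_iff, hφ hu hv hy huv hvy hyu, hψ hu hv hy huv hvy hyu]

theorem Agrees.K (h : Agrees φ) : Agrees φ.K := by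
  intro u v y hu hv hy huv hvy hyu
  constructor
  · intro hKu
    by_contra hKv
    obtain ⟨w, hw, hvw, hφw⟩ := normalModality_K.exists_mcs_not_mem hv hKv
    obtain ⟨m, hm, hum, hmw⟩ := exists_rk_rb_of_rb_rk hu hw huv hvw
    obtain ⟨y', hy', hyy', hy'm⟩ := exists_rk_rb_of_rb_rk hy hm hyu hum
    have hwy' : RK w y' := rk_trans hw (rk_trans hw (rk_symm hv hw hvw) hvy) hyy'
    exact hφw ((h hm hw hy' hmw hwy' hy'm).1 (hum _ hKu))
  · intro hKv
    by_contra hKu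
    obtain ⟨w, hw, huw, hφw⟩ := normalModality_K.exists_mcs_not_mem hu hKu
    obtain ⟨m, hm, hym, hmw⟩ := exists_rk_rb_of_rb_rk hy hw hyu huw
    obtain ⟨y', hy', huy', hy'm⟩ := exists_rk_rb_of_rb_rk hu hm huv (rk_trans hv hvy hym)
    have hwy' : RK w y' := rk_trans hw (rk_symm hu hw huw) huy'
    have hφm : φ ∈ m := hym _ (hvy _ (hv.mem_of_prf_imp (Prf.k4 φ) hKv))
    exact hφw ((h hm hw hy' hmw hwy' hy'm).1 hφm)

theorem Agrees.box (h : Agrees φ) : Agrees φ.box := by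
  intro u v y hu hv hy huv hvy hyu
  refine ⟨fun hφ => huv _ (hu.mem_of_prf_imp (Prf.box4 φ) hφ), fun hφ => ?_⟩
  by_contra hφu
  obtain ⟨z, hz, huz, hφz⟩ := normalModality_box.exists_mcs_not_mem hu hφu
  rcases rb_or_rb_of_rb_of_rb hu hv hz huv huz with hvz | hzv
  · exact hφz (hvz _ hφ)
  · have hyz : RB y z := rb_trans hy hyu huz
    exact hφz ((h hz hv hy hzv hvy hyz).2 (hv.mem_of_prf_imp (Prf.boxT φ) hφ))

theorem agrees : ∀ φ, Agrees φ
  | .atom n => agrees_atom n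
  | .neg φ => (agrees φ).neg
  | .and φ ψ => (agrees φ).and (agrees ψ)
  | .K φ => (agrees φ).K
  | .box φ => (agrees φ).box

theorem eq_of_rb_of_rk_of_rb (hs : MCS s) (ht : MCS t) (hu : MCS u) (hst : RB s t)
    (htu : RK t u) (hus : RB u s) : s = t :=
  Set.ext fun φ => agrees φ hs ht hu hst htu hus

/-- In the MPT canonical model, `→□` is antisymmetric. -/
theorem canonical_box_antisymm (s t : Set Fml) (hs : MCS s) (ht : MCS t)
    (hst : RB s t) (hts : RB t s) :
    s = t :=
  eq_of_rb_of_rk_of_rb hs ht ht hst (rk_refl ht) hts
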